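/- arXiv:2206.14525 — 3 statements merged into one kernel-verified Lean document; each statement's English description precedes it below -/
import Mathlib

section
/- Let R be a commutative ring, L an invertible R-module, and F a finitely generated projective R-module with a self-dual isomorphism f : F ≅ Hom(F, L) (i.e. f equals its own L-twisted transpose). Given a short exact sequence 0 → F₁ → F → Hom(F₂, L) → 0 of projective modules, define f₁ : F₁ → Hom(F₁, L) as the composition F₁ ↪ F → Hom(F,L) ↠ Hom(F₁,L) and f₂ : F₂ → Hom(F₂,L) as F₂ ↪ Hom(F,L) → F ↠ Hom(F₂,L) (using f⁻¹ and the dual sequence). Then f₁ and f₂ are self-dual and coker(f₁) ≅ coker(f₂). -/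
open TensorProduct

section Auxiliary

/-- From bijectivity of the contraction, an "adjoint involution" `A` on `L` such that
`μ x • y = μ y • A x` and `A ∘ A = id`. -/
theorem SelfDualAux.exists_swap_map {R L : Type*} [CommRing R] [AddCommGroup L] [Module R L]
    (hL : Function.Bijective (contractLeft R L)) :
    ∃ A : L →ₗ[R] L, (∀ (μ : Module.Dual R L) (x y : L), μ x • y = μ y • A x) ∧
      (∀ x, A (A x) = x) := by
  obtain ⟨u, hu⟩ := hL.2 1
  set A : L →ₗ[R] L := dualTensorHom R L L u with hA
  have hpure : ∀ (μ : Module.Dual R L) (m : L), μ ⊗ₜ[R] m = μ m • u := by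
    intro μ m
    apply hL.1
    simp [contractLeft_apply, hu]
  have hswap : ∀ (μ : Module.Dual R L) (x y : L), μ x • y = μ y • A x := by
    intro μ x y
    have := congrArg (fun t => dualTensorHom R L L t x) (hpure μ y)
    simpa using this
  refine ⟨A, hswap, ?_⟩
  intro y
  have hGH : (A ∘ₗ (dualTensorHom R L L).flip y)
      = (contractLeft R L).smulRight y := by
    apply TensorProduct.ext'
    intro μ m
    simp only [LinearMap.comp_apply, LinearMap.flip_apply, dualTensorHom_apply,
      LinearMap.smulRight_apply, contractLeft_apply, map_smul]
    exact (hswap μ m y).symm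
  have := congrArg (fun φ => φ u) hGH
  simpa [hu, ← hA] using this

/-- A finitely generated projective module has a finite dual basis. -/
theorem SelfDualAux.exists_dual_family (R M : Type*) [CommRing R] [AddCommGroup M] [Module R M]
    [Module.Finite R M] [Module.Projective R M] :
    ∃ (n : ℕ) (x : Fin n → M) (g : Fin n → (M →ₗ[R] R)),
      ∀ m : M, ∑ j, g j m • x j = m := by
  obtain ⟨n, π, s, -, -, hπs⟩ := Module.Finite.exists_comp_eq_id_of_projective R M
  refine ⟨n, fun j => π (Pi.single j (1:R) : _), fun j => (LinearMap.proj j) ∘ₗ s, fun m => ?_⟩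
  have : ∑ j, s m j • π (Pi.single j (1:R) : _)
      = π (∑ j, s m j • (Pi.single j (1:R) : Fin n → R)) := by
    rw [map_sum]; simp
  simp only [LinearMap.comp_apply, LinearMap.proj_apply]
  rw [this]
  have hsm : (∑ j, s m j • (Pi.single j (1:R) : Fin n → R)) = s m := by
    ext k
    simp [Pi.single_apply, Finset.sum_ite_eq']
  rw [hsm, ← LinearMap.comp_apply, hπs, LinearMap.id_apply]

/-- Evaluation `M → Hom(Hom(M,L),L)` is surjective for `M` f.g. projective, `L` invertible. -/
theorem SelfDualAux.eval_surjective {R L M : Type*} [CommRing R] [AddCommGroup L] [Module R L]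
    [AddCommGroup M] [Module R M]
    [Module.Finite R L] [Module.Projective R L] [Module.Finite R M] [Module.Projective R M]
    (hL : Function.Bijective (contractLeft R L)) (ψ : (M →ₗ[R] L) →ₗ[R] L) :
    ∃ y : M, ∀ χ : M →ₗ[R] L, χ y = ψ χ := by
  obtain ⟨A, hswap, hA2⟩ := SelfDualAux.exists_swap_map hL
  have hswap' : ∀ (μ : Module.Dual R L) (x y : L), μ (A x) • y = μ y • x := by
    intro μ x y
    simpa [hA2] using hswap μ (A x) y
  obtain ⟨n, x, g, hx⟩ := SelfDualAux.exists_dual_family R M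
  obtain ⟨m, b, ν, hb⟩ := SelfDualAux.exists_dual_family R L
  refine ⟨∑ i, ∑ k, (ν k (A (ψ ((g i).smulRight (b k))))) • x i, fun χ => ?_⟩
  have hχ : χ = ∑ i, ∑ k, ν k (χ (x i)) • (g i).smulRight (b k) := by
    ext z
    simp only [LinearMap.sum_apply, LinearMap.smul_apply, LinearMap.smulRight_apply]
    calc χ z = χ (∑ i, g i z • x i) := by rw [hx]
      _ = ∑ i, g i z • χ (x i) := by rw [map_sum]; simp
      _ = ∑ i, g i z • ∑ k, ν k (χ (x i)) • b k := by
          refine Finset.sum_congr rfl fun i _ => ?_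
          rw [hb]
      _ = ∑ i, ∑ k, ν k (χ (x i)) • g i z • b k := by
          refine Finset.sum_congr rfl fun i _ => ?_
          rw [Finset.smul_sum]
          exact Finset.sum_congr rfl fun k _ => smul_comm _ _ _
  calc χ (∑ i, ∑ k, (ν k (A (ψ ((g i).smulRight (b k))))) • x i)
      = ∑ i, ∑ k, (ν k (A (ψ ((g i).smulRight (b k))))) • χ (x i) := by
        rw [map_sum]; simp [map_sum]
    _ = ∑ i, ∑ k, ν k (χ (x i)) • ψ ((g i).smulRight (b k)) := by
        exact Finset.sum_congr rfl fun i _ => Finset.sum_congr rfl fun k _ =>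
          hswap' (ν k) (ψ ((g i).smulRight (b k))) (χ (x i))
    _ = ψ (∑ i, ∑ k, ν k (χ (x i)) • (g i).smulRight (b k)) := by
        rw [map_sum]; simp [map_sum]
    _ = ψ χ := by rw [← hχ]

/-- `Hom(M, L)` is projective when `M` and `L` are finitely generated projective. -/
theorem SelfDualAux.hom_projective (R M L : Type*) [CommRing R] [AddCommGroup M] [Module R M]
    [AddCommGroup L] [Module R L] [Module.Finite R M] [Module.Projective R M]
    [Module.Finite R L] [Module.Projective R L] :
    Module.Projective R (M →ₗ[R] L) := by
  obtain ⟨n, π, s, -, -, hπs⟩ := Module.Finite.exists_comp_eq_id_of_projective R M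
  obtain ⟨m, πL, sL, -, -, hπsL⟩ := Module.Finite.exists_comp_eq_id_of_projective R L
  haveI : Module.Projective R ((Fin n → R) →ₗ[R] (Fin m → R)) :=
    Module.Projective.of_equiv (LinearEquiv.piRing R (Fin m → R) (Fin n) R).symm
  refine Module.Projective.of_split
    (M := (Fin n → R) →ₗ[R] (Fin m → R))
    ((LinearMap.llcomp R (Fin n → R) L (Fin m → R) sL) ∘ₗ (LinearMap.lcomp R L π))
    ((LinearMap.llcomp R M (Fin m → R) L πL) ∘ₗ (LinearMap.lcomp R (Fin m → R) s)) ?_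
  ext χ z
  simp only [LinearMap.comp_apply, LinearMap.llcomp_apply, LinearMap.lcomp_apply,
    LinearMap.id_apply]
  have h1 : π (s z) = z := by
    have := congrArg (fun φ => φ z) hπs; simpa using this
  have h2 : ∀ w : L, πL (sL w) = w := by
    intro w
    have := congrArg (fun φ => φ w) hπsL; simpa using this
  rw [h1, h2]

end Auxiliary
/-- Let `R` be a commutative ring, `L` an invertible `R`-module (a finitely
generated projective module for which the contraction `L* ⊗ L → R` is bijective), and `F` a
finitely generated projective `R`-module with a self-dual isomorphism `f : F ≅ Hom(F, L)`
(self-dual meaning that the associated bilinear form is symmetric).  Given a short exact sequence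
`0 → F₁ → F → Hom(F₂, L) → 0` of finitely generated projective modules, define
`f₁ : F₁ → Hom(F₁, L)` as the composition `F₁ ↪ F → Hom(F, L) ↠ Hom(F₁, L)` and
`f₂ : F₂ → Hom(F₂, L)` as `F₂ ↪ Hom(F, L) → F ↠ Hom(F₂, L)` (using `f⁻¹` and the dual
sequence, where `F₂ ↪ Hom(F, L)` is `p.flip`).  Then `f₁` and `f₂` are self-dual and
`coker f₁ ≅ coker f₂`. -/
theorem selfDual_restriction_coker_iso
    {R L F F₁ F₂ : Type*} [CommRing R]
    [AddCommGroup L] [Module R L] [AddCommGroup F] [Module R F]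
    [AddCommGroup F₁] [Module R F₁] [AddCommGroup F₂] [Module R F₂]
    [Module.Finite R L] [Module.Projective R L]
    (hL : Function.Bijective (contractLeft R L))
    [Module.Finite R F] [Module.Projective R F]
    [Module.Finite R F₁] [Module.Projective R F₁]
    [Module.Finite R F₂] [Module.Projective R F₂]
    (f : F ≃ₗ[R] (F →ₗ[R] L))
    (hf : ∀ x y : F, f x y = f y x)
    (i : F₁ →ₗ[R] F) (p : F →ₗ[R] (F₂ →ₗ[R] L))
    (hi : Function.Injective i) (hp : Function.Surjective p)
    (hexact : LinearMap.range i = LinearMap.ker p) :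
    (∀ x y : F₁,
      (LinearMap.compl₁₂ (f : F →ₗ[R] (F →ₗ[R] L)) i i) x y
        = (LinearMap.compl₁₂ (f : F →ₗ[R] (F →ₗ[R] L)) i i) y x) ∧
    (∀ x y : F₂,
      (p ∘ₗ (f.symm : (F →ₗ[R] L) →ₗ[R] F) ∘ₗ p.flip) x y
        = (p ∘ₗ (f.symm : (F →ₗ[R] L) →ₗ[R] F) ∘ₗ p.flip) y x) ∧
    Nonempty
      (((F₁ →ₗ[R] L) ⧸
          LinearMap.range (LinearMap.compl₁₂ (f : F →ₗ[R] (F →ₗ[R] L)) i i)) ≃ₗ[R]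
        ((F₂ →ₗ[R] L) ⧸
          LinearMap.range (p ∘ₗ (f.symm : (F →ₗ[R] L) →ₗ[R] F) ∘ₗ p.flip))) := by
  classical
  refine ⟨fun x y => by simpa [LinearMap.compl₁₂_apply] using hf (i x) (i y), ?_, ?_⟩
  · -- symmetry of f₂
    intro x y
    simp only [LinearMap.comp_apply]
    calc p (f.symm (p.flip x)) y
        = p.flip y (f.symm (p.flip x)) := rfl
      _ = f (f.symm (p.flip y)) (f.symm (p.flip x)) := by rw [f.apply_symm_apply]
      _ = f (f.symm (p.flip x)) (f.symm (p.flip y)) := hf _ _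
      _ = p.flip x (f.symm (p.flip y)) := by rw [f.apply_symm_apply]
      _ = p (f.symm (p.flip y)) x := rfl
  -- the cokernel isomorphism
  -- a section of p
  haveI : Module.Projective R (F₂ →ₗ[R] L) := SelfDualAux.hom_projective R F₂ L
  obtain ⟨σ, hσ⟩ := Module.projective_lifting_property p LinearMap.id hp
  have hσ' : ∀ χ, p (σ χ) = χ := fun χ => by
    have := congrArg (fun φ => φ χ) hσ; simpa using this
  -- a retraction of i
  set q : F →ₗ[R] F := LinearMap.id - σ ∘ₗ p with hq
  have hqmem : ∀ z : F, q z ∈ LinearMap.range i := by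
    intro z
    rw [hexact, LinearMap.mem_ker]
    simp [hq, hσ' (p z)]
  have hqker : ∀ z ∈ LinearMap.ker p, q z = z := by
    intro z hz
    simp [hq, LinearMap.mem_ker.1 hz]
  set e := LinearEquiv.ofInjective i hi with he
  set ρ : F →ₗ[R] F₁ := e.symm.toLinearMap ∘ₗ (q.codRestrict (LinearMap.range i) hqmem)
    with hρ
  have hiρ : ∀ z : F, i (ρ z) = q z := by
    intro z
    simp only [hρ, LinearMap.comp_apply, LinearEquiv.coe_coe, he]
    exact LinearEquiv.ofInjective_symm_apply (f := i) (h := hi) ⟨q z, hqmem z⟩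
  have hρi : ∀ z : F₁, ρ (i z) = z := by
    intro z
    apply hi
    rw [hiρ]
    exact hqker (i z) (hexact ▸ LinearMap.mem_range_self i z)
  -- the map g : F → Hom(F₁, L)
  set g : F →ₗ[R] (F₁ →ₗ[R] L) := (f : F →ₗ[R] (F →ₗ[R] L)).compl₂ i with hg
  have hgsurj : Function.Surjective g := by
    intro ξ
    refine ⟨f.symm (ξ ∘ₗ ρ), ?_⟩
    ext z
    simp [hg, LinearMap.compl₂_apply, hρi]
  have hkerg : LinearMap.ker g
      = Submodule.comap (f : F →ₗ[R] (F →ₗ[R] L)) (LinearMap.range p.flip) := by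
    ext x
    simp only [LinearMap.mem_ker, Submodule.mem_comap, LinearMap.mem_range]
    constructor
    · intro h0
      have hkill : ∀ z ∈ LinearMap.ker p, f x z = 0 := by
        intro z hz
        rw [← hexact] at hz
        obtain ⟨w, rfl⟩ := hz
        have := congrArg (fun φ => φ w) h0
        simpa [hg, LinearMap.compl₂_apply] using this
      obtain ⟨y, hy⟩ := SelfDualAux.eval_surjective hL ((f x : F →ₗ[R] L) ∘ₗ σ)
      refine ⟨y, ?_⟩
      ext z
      have h1 : (p z) y = f x (σ (p z)) := by
        have := hy (p z); simpa using this
      have h2 : f x (σ (p z)) = f x z := by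
        have hz : z - σ (p z) ∈ LinearMap.ker p := by
          rw [LinearMap.mem_ker]; simp [hσ' (p z)]
        have := hkill _ hz
        rw [map_sub] at this
        exact (sub_eq_zero.mp this).symm
      calc p.flip y z = p z y := rfl
        _ = f x z := by rw [h1, h2]
    · rintro ⟨y, hy⟩
      ext w
      have hpiw : p (i w) = 0 := LinearMap.mem_ker.1 (hexact ▸ LinearMap.mem_range_self i w)
      have hfx : ((f : F →ₗ[R] (F →ₗ[R] L)) x) (i w) = p (i w) y := by
        rw [← hy]; rfl
      show ((f : F →ₗ[R] (F →ₗ[R] L)) x) (i w) = 0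
      rw [hfx, hpiw]
      simp
  -- f₁ = g ∘ i
  have hf₁ : LinearMap.compl₁₂ (f : F →ₗ[R] (F →ₗ[R] L)) i i = g ∘ₗ i := by
    ext x y
    rfl
  -- the first quotient
  set π₁ : F →ₗ[R] ((F₁ →ₗ[R] L) ⧸
      LinearMap.range (LinearMap.compl₁₂ (f : F →ₗ[R] (F →ₗ[R] L)) i i)) :=
    (LinearMap.range (LinearMap.compl₁₂ (f : F →ₗ[R] (F →ₗ[R] L)) i i)).mkQ ∘ₗ g with hπ₁
  have hπ₁surj : Function.Surjective π₁ := (Submodule.mkQ_surjective _).comp hgsurj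
  have hπ₁ker : LinearMap.ker π₁ = LinearMap.range i ⊔ LinearMap.ker g := by
    rw [hπ₁, LinearMap.ker_comp, Submodule.ker_mkQ, hf₁, LinearMap.range_comp,
      Submodule.comap_map_eq]
  -- the second quotient
  set h2 : (F →ₗ[R] L) →ₗ[R] (F₂ →ₗ[R] L) := p ∘ₗ (f.symm : (F →ₗ[R] L) →ₗ[R] F) with hh2
  have hf₂ : p ∘ₗ (f.symm : (F →ₗ[R] L) →ₗ[R] F) ∘ₗ p.flip = h2 ∘ₗ p.flip := by
    rw [hh2, LinearMap.comp_assoc]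
  have hh2surj : Function.Surjective h2 := hp.comp f.symm.surjective
  have hkerh : LinearMap.ker h2
      = Submodule.map (f : F →ₗ[R] (F →ₗ[R] L)) (LinearMap.range i) := by
    rw [hh2, LinearMap.ker_comp, ← hexact]
    exact (Submodule.map_equiv_eq_comap_symm f (LinearMap.range i)).symm
  set π₂ : (F →ₗ[R] L) →ₗ[R] ((F₂ →ₗ[R] L) ⧸
      LinearMap.range (p ∘ₗ (f.symm : (F →ₗ[R] L) →ₗ[R] F) ∘ₗ p.flip)) :=
    (LinearMap.range (p ∘ₗ (f.symm : (F →ₗ[R] L) →ₗ[R] F) ∘ₗ p.flip)).mkQ ∘ₗ h2 with hπ₂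
  have hπ₂surj : Function.Surjective π₂ := (Submodule.mkQ_surjective _).comp hh2surj
  have hπ₂ker : LinearMap.ker π₂ = LinearMap.range p.flip ⊔ LinearMap.ker h2 := by
    rw [hπ₂, LinearMap.ker_comp, Submodule.ker_mkQ, hf₂, LinearMap.range_comp,
      Submodule.comap_map_eq]
  -- the bridge
  have hbridge : Submodule.map (f : F →ₗ[R] (F →ₗ[R] L)) (LinearMap.ker π₁)
      = LinearMap.ker π₂ := by
    rw [hπ₁ker, hπ₂ker, Submodule.map_sup, hkerg, hkerh,
      Submodule.map_comap_eq, LinearEquiv.range, top_inf_eq]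
    exact sup_comm _ _
  exact ⟨((π₁.quotKerEquivOfSurjective hπ₁surj).symm.trans
    (Submodule.Quotient.equiv (LinearMap.ker π₁) (LinearMap.ker π₂) f hbridge)).trans
    (π₂.quotKerEquivOfSurjective hπ₂surj)⟩
end

section
/- Let U be a 3-dimensional vector space over an algebraically closed field of characteristic 0, and identify quadrics in P(S²U) containing the Veronese surface with conics in P(U*) via the isomorphism ker(S²(S²U*) → S⁴U*) ≅ S²U. If f = u⊗v + v⊗u ∈ S²U with u, v linearly independent (so the conic C_f has rank 2), then the corresponding quadric Q_f ⊂ P(S²U) has rank 4, and the vertex (projectivized kernel) of Q_f is the line spanned by u⊗u and v⊗v in P(S²U). -/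
noncomputable section

open Matrix

/-- The submodule of symmetric `3 × 3` matrices, modelling `S²U` (and, dually, the space of
quadratic forms on `S²U*`). -/
def symmMatrices (k : Type*) [Field k] : Submodule k (Matrix (Fin 3) (Fin 3) k) where
  carrier := {B | B.IsSymm}
  add_mem' := fun ha hb => ha.add hb
  zero_mem' := Matrix.isSymm_zero
  smul_mem' := fun c _ h => h.smul c

/-- The quadratic form on (symmetric) matrices attached to `A`: `Q_A(B) = tr (A * adj B)`.
For symmetric `A` these are exactly the quadrics on `P(S²U)` containing the Veronese surface,
and `A` is the symmetric matrix of the corresponding conic in `P(U*)`. -/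
def veroneseQuadric {k : Type*} [Field k] (A B : Matrix (Fin 3) (Fin 3) k) : k :=
  (A * B.adjugate).trace

/-- `Q` transforms by `det g ^ 2` under the congruence action of `g`. -/
lemma veroneseQuadric_congr {k : Type*} [Field k] (g A B : Matrix (Fin 3) (Fin 3) k) :
    veroneseQuadric (g * A * gᵀ) (g * B * gᵀ) = g.det ^ 2 * veroneseQuadric A B := by
  unfold veroneseQuadric
  rw [adjugate_mul_distrib, adjugate_mul_distrib]
  have h1 : gᵀ * adjugate gᵀ = g.det • 1 := by rw [mul_adjugate, det_transpose]
  have h2 : adjugate g * g = g.det • 1 := adjugate_mul g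
  have key : g * A * gᵀ * (adjugate gᵀ * (adjugate B * adjugate g))
      = g.det • (g * (A * (adjugate B * adjugate g))) := by
    rw [Matrix.mul_assoc (g * A), ← Matrix.mul_assoc gᵀ, h1]
    simp [Matrix.mul_smul, Matrix.smul_mul, Matrix.mul_assoc]
  rw [key, trace_smul, trace_mul_comm g, Matrix.mul_assoc, Matrix.mul_assoc, h2]
  simp [Matrix.mul_smul, smul_eq_mul]
  ring

/-- The polar form of the quadric attached to the standard rank-two conic `xy`,
computed explicitly on symmetric matrices. -/
lemma veroneseQuadric_polar_A0 {k : Type*} [Field k]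
    (b00 b01 b02 b11 b12 b22 c00 c01 c02 c11 c12 c22 : k) :
    veroneseQuadric !![0,1,0;1,0,0;0,0,0]
        (!![b00,b01,b02;b01,b11,b12;b02,b12,b22] + !![c00,c01,c02;c01,c11,c12;c02,c12,c22])
      - veroneseQuadric !![0,1,0;1,0,0;0,0,0] !![b00,b01,b02;b01,b11,b12;b02,b12,b22]
      - veroneseQuadric !![0,1,0;1,0,0;0,0,0] !![c00,c01,c02;c01,c11,c12;c02,c12,c22]
    = 2 * (b02 * c12 + b12 * c02 - b01 * c22 - b22 * c01) := by
  have h : !![b00,b01,b02;b01,b11,b12;b02,b12,b22] + !![c00,c01,c02;c01,c11,c12;c02,c12,c22]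
      = !![b00+c00,b01+c01,b02+c02;b01+c01,b11+c11,b12+c12;b02+c02,b12+c12,b22+c22] := by
    ext i j; fin_cases i <;> fin_cases j <;> simp
  rw [h]
  simp [veroneseQuadric, adjugate_fin_three_of, Matrix.trace_fin_three, Matrix.mul_apply,
    Fin.sum_univ_three]
  ring

/-- Any symmetric `3 × 3` matrix is determined by its upper-triangular entries. -/
lemma isSymm_fin_three_eq {k : Type*} [Field k] {C : Matrix (Fin 3) (Fin 3) k}
    (hC : C.IsSymm) :
    C = !![C 0 0, C 0 1, C 0 2; C 0 1, C 1 1, C 1 2; C 0 2, C 1 2, C 2 2] := by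
  ext i j
  fin_cases i <;> fin_cases j <;> simp <;> exact (hC.apply _ _).symm

/-- Coordinates on the space of symmetric `3 × 3` matrices. -/
def symmEquiv (k : Type*) [Field k] : symmMatrices k ≃ₗ[k] (Fin 6 → k) where
  toFun C := ![C.1 0 0, C.1 0 1, C.1 0 2, C.1 1 1, C.1 1 2, C.1 2 2]
  map_add' C D := by funext i; fin_cases i <;> rfl
  map_smul' c C := by funext i; fin_cases i <;> rfl
  invFun c := ⟨!![c 0, c 1, c 2; c 1, c 3, c 4; c 2, c 4, c 5], by
    show Matrix.IsSymm _
    ext i j; fin_cases i <;> fin_cases j <;> rfl⟩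
  left_inv C := by
    obtain ⟨C, hC⟩ := C
    ext i j
    fin_cases i <;> fin_cases j <;> simp <;>
      first
        | rfl
        | exact (hC.apply _ _)
        | exact (hC.apply _ _).symm
  right_inv c := by funext i; fin_cases i <;> rfl


/-- On symmetric matrices, the radical of the polar form of the quadric attached to the
standard rank-two conic is spanned by `E₀₀` and `E₁₁`. -/
lemma radical_A0 {k : Type*} [Field k] [CharZero k] (D : Matrix (Fin 3) (Fin 3) k)
    (hD : D.IsSymm)
    (h : ∀ B : Matrix (Fin 3) (Fin 3) k, B.IsSymm →
      veroneseQuadric !![0,1,0;1,0,0;0,0,0] (B + D)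
        - veroneseQuadric !![0,1,0;1,0,0;0,0,0] B
        - veroneseQuadric !![0,1,0;1,0,0;0,0,0] D = 0) :
    D = D 0 0 • !![(1:k),0,0;0,0,0;0,0,0] + D 1 1 • !![(0:k),0,0;0,1,0;0,0,0] := by
  have hDeq := isSymm_fin_three_eq hD
  have s1 : (!![(0:k),0,0;0,0,0;0,0,1]).IsSymm := by
    show _ᵀ = _; ext i j; fin_cases i <;> fin_cases j <;> rfl
  have s2 : (!![(0:k),1,0;1,0,0;0,0,0]).IsSymm := by
    show _ᵀ = _; ext i j; fin_cases i <;> fin_cases j <;> rfl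
  have s3 : (!![(0:k),0,1;0,0,0;1,0,0]).IsSymm := by
    show _ᵀ = _; ext i j; fin_cases i <;> fin_cases j <;> rfl
  have s4 : (!![(0:k),0,0;0,0,1;0,1,0]).IsSymm := by
    show _ᵀ = _; ext i j; fin_cases i <;> fin_cases j <;> rfl
  have hc01 : D 0 1 = 0 := by
    have e := h !![0,0,0;0,0,0;0,0,1] s1
    rw [hDeq, veroneseQuadric_polar_A0] at e
    linear_combination -e/2
  have hc22 : D 2 2 = 0 := by
    have e := h !![0,1,0;1,0,0;0,0,0] s2
    rw [hDeq, veroneseQuadric_polar_A0] at e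
    linear_combination -e/2
  have hc12 : D 1 2 = 0 := by
    have e := h !![0,0,1;0,0,0;1,0,0] s3
    rw [hDeq, veroneseQuadric_polar_A0] at e
    linear_combination e/2
  have hc02 : D 0 2 = 0 := by
    have e := h !![0,0,0;0,0,1;0,1,0] s4
    rw [hDeq, veroneseQuadric_polar_A0] at e
    linear_combination e/2
  ext i j
  fin_cases i <;> fin_cases j <;>
    simp [Matrix.add_apply, Matrix.smul_apply, smul_eq_mul, Matrix.cons_val_two,
      Matrix.vecHead, Matrix.vecTail] <;>
    first
      | exact hc01
      | exact hc02
      | exact hc12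
      | exact hc22
      | exact (hD.apply _ _).trans hc01
      | exact (hD.apply _ _).trans hc02
      | exact (hD.apply _ _).trans hc12

/-- Diagonal matrices supported on the first two entries pair to zero with every symmetric
matrix under the polar form of the standard rank-two quadric. -/
lemma polar_zero_A0 {k : Type*} [Field k] (a b : k) (B : Matrix (Fin 3) (Fin 3) k)
    (hB : B.IsSymm) :
    veroneseQuadric !![0,1,0;1,0,0;0,0,0] (B + !![a,0,0;0,b,0;0,0,0])
      - veroneseQuadric !![0,1,0;1,0,0;0,0,0] B
      - veroneseQuadric !![0,1,0;1,0,0;0,0,0] !![a,0,0;0,b,0;0,0,0] = 0 := by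
  rw [isSymm_fin_three_eq hB]
  linear_combination
    veroneseQuadric_polar_A0 (B 0 0) (B 0 1) (B 0 2) (B 1 1) (B 1 2) (B 2 2) a 0 0 b 0 0

/-- Let `U` be a 3-dimensional vector space over an algebraically closed field
of characteristic `0`, and identify quadrics in `P(S²U)` containing the Veronese surface with
conics in `P(U*)`.  If `f = u⊗v + v⊗u` with `u, v` linearly independent (so the conic `C_f` has
rank `2`), then the corresponding quadric `Q_f ⊂ P(S²U)` has rank `4`, and its vertex
(projectivized kernel) is the line spanned by `u⊗u` and `v⊗v`: on the 6-dimensional space of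
symmetric matrices, the radical of the polar form of `Q_f` is exactly the 2-dimensional span of
`u⊗u` and `v⊗v`. -/
theorem veroneseQuadric_rank_two_conic
    {k : Type*} [Field k] [IsAlgClosed k] [CharZero k]
    (u v : Fin 3 → k) (huv : LinearIndependent k ![u, v]) :
    (∀ C : Matrix (Fin 3) (Fin 3) k,
      (C.IsSymm ∧ ∀ B : Matrix (Fin 3) (Fin 3) k, B.IsSymm →
          veroneseQuadric (vecMulVec u v + vecMulVec v u) (B + C)
            - veroneseQuadric (vecMulVec u v + vecMulVec v u) B
            - veroneseQuadric (vecMulVec u v + vecMulVec v u) C = 0)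
        ↔ C ∈ Submodule.span k ({vecMulVec u u, vecMulVec v v} :
            Set (Matrix (Fin 3) (Fin 3) k))) ∧
    Module.finrank k
        ↥(Submodule.span k ({vecMulVec u u, vecMulVec v v} :
            Set (Matrix (Fin 3) (Fin 3) k))) = 2 ∧
    Module.finrank k ↥(symmMatrices k) = 6 := by
  classical
  -- extend `u, v` to a basis, encoded as an invertible matrix `g` with columns `u`, `v`, `w`
  have hex : ∃ w : Fin 3 → k,
      IsUnit (Matrix.of fun i j => (![u, v, w] : Fin 3 → Fin 3 → k) j i) := by
    have : ∃ w, w ∉ Submodule.span k (Set.range ![u, v]) := by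
      by_contra h
      push_neg at h
      have htop : Submodule.span k (Set.range ![u, v]) = ⊤ := by
        rw [Submodule.eq_top_iff']; exact h
      have h2 : Module.finrank k (Submodule.span k (Set.range ![u, v])) = 2 := by
        rw [finrank_span_eq_card huv]; simp
      rw [htop, finrank_top, Module.finrank_fin_fun] at h2
      norm_num at h2
    obtain ⟨w, hw⟩ := this
    refine ⟨w, ?_⟩
    rw [← isUnit_transpose, ← linearIndependent_rows_iff_isUnit]
    have hli : LinearIndependent k (Fin.snoc ![u, v] w : Fin 3 → Fin 3 → k) :=
      linearIndependent_fin_snoc.2 ⟨huv, hw⟩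
    have he : (fun i => (Matrix.of fun i j => (![u, v, w] : Fin 3 → Fin 3 → k) j i)ᵀ i)
        = (Fin.snoc ![u, v] w : Fin 3 → Fin 3 → k) := by
      funext i; fin_cases i <;> rfl
    change LinearIndependent k (fun i => (Matrix.of fun i j => (![u, v, w] : Fin 3 → Fin 3 → k) j i)ᵀ i)
    rw [he]; exact hli
  obtain ⟨w, hg⟩ := hex
  set g : Matrix (Fin 3) (Fin 3) k := Matrix.of fun i j => ![u, v, w] j i with hgdef
  have hdet : IsUnit g.det := (Matrix.isUnit_iff_isUnit_det g).mp hg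
  have hdet0 : g.det ≠ 0 := hdet.ne_zero
  have hginv : g * g⁻¹ = 1 := Matrix.mul_nonsing_inv g hdet
  have hinvg : g⁻¹ * g = 1 := Matrix.nonsing_inv_mul g hdet
  -- the three conjugation identities
  have hE00 : g * !![(1:k),0,0;0,0,0;0,0,0] * gᵀ = vecMulVec u u := by
    ext i j
    simp [g, Matrix.mul_apply, Fin.sum_univ_three, vecMulVec, Matrix.cons_val_two,
      Matrix.vecHead, Matrix.vecTail]
  have hE11 : g * !![(0:k),0,0;0,1,0;0,0,0] * gᵀ = vecMulVec v v := by
    ext i j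
    simp [g, Matrix.mul_apply, Fin.sum_univ_three, vecMulVec, Matrix.cons_val_two,
      Matrix.vecHead, Matrix.vecTail]
  have hA0 : g * !![(0:k),1,0;1,0,0;0,0,0] * gᵀ = vecMulVec u v + vecMulVec v u := by
    ext i j
    simp [g, Matrix.mul_apply, Fin.sum_univ_three, vecMulVec, Matrix.cons_val_two,
      Matrix.vecHead, Matrix.vecTail]
    ring
  refine ⟨?_, ?_, ?_⟩
  · -- the radical computation
    intro C
    constructor
    · rintro ⟨hCsymm, hrad⟩
      -- transport `C` back by the congruence action of `g⁻¹`
      set C' : Matrix (Fin 3) (Fin 3) k := g⁻¹ * C * (g⁻¹)ᵀ with hC'def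
      have hC'conj : g * C' * gᵀ = C := by
        rw [hC'def]
        calc g * (g⁻¹ * C * (g⁻¹)ᵀ) * gᵀ
            = (g * g⁻¹) * C * ((g⁻¹)ᵀ * gᵀ) := by noncomm_ring
          _ = C := by
              rw [hginv, ← Matrix.transpose_mul, hginv, Matrix.transpose_one,
                Matrix.one_mul, Matrix.mul_one]
      have hC'symm : C'.IsSymm := by
        show C'ᵀ = C'
        rw [hC'def]
        simp [Matrix.transpose_mul, Matrix.mul_assoc, hCsymm.eq]
      have hβ0 : ∀ B' : Matrix (Fin 3) (Fin 3) k, B'.IsSymm →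
          veroneseQuadric !![0,1,0;1,0,0;0,0,0] (B' + C')
            - veroneseQuadric !![0,1,0;1,0,0;0,0,0] B'
            - veroneseQuadric !![0,1,0;1,0,0;0,0,0] C' = 0 := by
        intro B' hB'
        have hBsymm : (g * B' * gᵀ).IsSymm := by
          show _ᵀ = _
          simp [Matrix.transpose_mul, Matrix.mul_assoc, hB'.eq]
        have h := hrad (g * B' * gᵀ) hBsymm
        rw [← hA0, ← hC'conj] at h
        rw [show g * B' * gᵀ + g * C' * gᵀ = g * (B' + C') * gᵀ from by noncomm_ring] at h
        rw [veroneseQuadric_congr, veroneseQuadric_congr, veroneseQuadric_congr] at h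
        have h2 : g.det ^ 2 * (veroneseQuadric !![0,1,0;1,0,0;0,0,0] (B' + C')
            - veroneseQuadric !![0,1,0;1,0,0;0,0,0] B'
            - veroneseQuadric !![0,1,0;1,0,0;0,0,0] C') = 0 := by linear_combination h
        exact (mul_eq_zero.mp h2).resolve_left (pow_ne_zero 2 hdet0)
      have hdecomp := radical_A0 C' hC'symm hβ0
      rw [← hC'conj, hdecomp]
      have hsplit : g * (C' 0 0 • !![(1:k),0,0;0,0,0;0,0,0]
            + C' 1 1 • !![(0:k),0,0;0,1,0;0,0,0]) * gᵀ
          = C' 0 0 • (g * !![(1:k),0,0;0,0,0;0,0,0] * gᵀ)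
            + C' 1 1 • (g * !![(0:k),0,0;0,1,0;0,0,0] * gᵀ) := by
        rw [Matrix.mul_add, Matrix.add_mul, Matrix.mul_smul, Matrix.mul_smul,
          Matrix.smul_mul, Matrix.smul_mul]
      rw [hsplit, hE00, hE11]
      exact Submodule.mem_span_pair.mpr ⟨C' 0 0, C' 1 1, rfl⟩
    · intro hC
      obtain ⟨a, b, hab⟩ := Submodule.mem_span_pair.mp hC
      have hCsymm : C.IsSymm := by
        rw [← hab]
        apply Matrix.IsSymm.ext
        intro i j
        simp only [Matrix.add_apply, Matrix.smul_apply, Matrix.vecMulVec_apply, smul_eq_mul]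
        ring
      refine ⟨hCsymm, ?_⟩
      intro B hB
      set B' : Matrix (Fin 3) (Fin 3) k := g⁻¹ * B * (g⁻¹)ᵀ with hB'def
      have hB'conj : g * B' * gᵀ = B := by
        rw [hB'def]
        calc g * (g⁻¹ * B * (g⁻¹)ᵀ) * gᵀ
            = (g * g⁻¹) * B * ((g⁻¹)ᵀ * gᵀ) := by noncomm_ring
          _ = B := by
              rw [hginv, ← Matrix.transpose_mul, hginv, Matrix.transpose_one,
                Matrix.one_mul, Matrix.mul_one]
      have hB'symm : B'.IsSymm := by
        show B'ᵀ = B'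
        rw [hB'def]
        simp [Matrix.transpose_mul, Matrix.mul_assoc, hB.eq]
      have hD : (a • !![(1:k),0,0;0,0,0;0,0,0] + b • !![(0:k),0,0;0,1,0;0,0,0])
          = !![a,0,0;0,b,0;0,0,0] := by
        ext i j
        fin_cases i <;> fin_cases j <;>
          simp [Matrix.add_apply, Matrix.smul_apply, smul_eq_mul, Matrix.cons_val_two,
            Matrix.vecHead, Matrix.vecTail]
      have hCconj : g * !![a,0,0;0,b,0;0,0,0] * gᵀ = C := by
        rw [← hD, ← hab, ← hE00, ← hE11]
        rw [Matrix.mul_add, Matrix.add_mul, Matrix.mul_smul, Matrix.mul_smul,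
          Matrix.smul_mul, Matrix.smul_mul]
      rw [← hA0, ← hB'conj, ← hCconj]
      rw [show g * B' * gᵀ + g * !![a,0,0;0,b,0;0,0,0] * gᵀ
          = g * (B' + !![a,0,0;0,b,0;0,0,0]) * gᵀ from by noncomm_ring]
      rw [veroneseQuadric_congr, veroneseQuadric_congr, veroneseQuadric_congr]
      linear_combination (g.det ^ 2) * polar_zero_A0 a b B' hB'symm
  · -- finrank of the span is 2
    have hpair := LinearIndependent.pair_iff.mp huv
    have hu : ∃ i, u i ≠ 0 := by
      by_contra h; push_neg at h
      exact (huv.ne_zero 0) (by simp; funext i; exact h i)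
    have hv : ∃ i, v i ≠ 0 := by
      by_contra h; push_neg at h
      exact (huv.ne_zero 1) (by simp; funext i; exact h i)
    obtain ⟨i0, hi0⟩ := hu
    obtain ⟨j0, hj0⟩ := hv
    have hli : LinearIndependent k ![vecMulVec u u, vecMulVec v v] := by
      rw [LinearIndependent.pair_iff]
      intro s t hst
      have key : ∀ i : Fin 3, s * u i = 0 ∧ t * v i = 0 := by
        intro i
        apply hpair
        funext j
        have := congrFun (congrFun hst i) j
        simp [vecMulVec, Matrix.add_apply, Matrix.smul_apply, smul_eq_mul] at this ⊢
        ring_nf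
        ring_nf at this
        linear_combination this
      constructor
      · rcases key i0 with ⟨h1, _⟩
        exact (mul_eq_zero.mp h1).resolve_right hi0
      · rcases key j0 with ⟨_, h2⟩
        exact (mul_eq_zero.mp h2).resolve_right hj0
    have hrange : Set.range ![vecMulVec u u, vecMulVec v v]
        = ({vecMulVec u u, vecMulVec v v} : Set (Matrix (Fin 3) (Fin 3) k)) := by
      ext x; simp [Fin.exists_fin_two]; tauto
    rw [← hrange, finrank_span_eq_card hli]
    simp
  · -- finrank of the symmetric matrices is 6
    rw [LinearEquiv.finrank_eq (symmEquiv k), Module.finrank_fin_fun]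
end
end

section
/- With the explicit λ and the 2-plane U₂' = span(e_α, e_{−α}) ⊂ V, the contraction λ ⌟ U₂' equals e_γ∨∧e_{−γ}∨ + e_β∨∧e_{−β}∨ as a 2-form on V/U₂' ≅ span(e₀,e_β,e_{−β},e_γ,e_{−γ}), and this 2-form has rank 4 (the maximal possible rank on a 5-dimensional space). -/
open Matrix

noncomputable section

/-- The 7-dimensional fundamental representation `V` of `G₂`, with coordinates indexed so that
`e 0 = e₀`, `e 1 = e_α`, `e 2 = e_{−α}`, `e 3 = e_β`, `e 4 = e_{−β}`, `e 5 = e_γ`,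
`e 6 = e_{−γ}`. -/
abbrev V7 (k : Type*) [Field k] := Fin 7 → k

/-- The standard basis vectors of `V`. -/
def e (k : Type*) [Field k] (i : Fin 7) : V7 k := Pi.single i 1

/-- The 4-form `eᵢ∨∧eⱼ∨∧eₗ∨∧eₘ∨` evaluated on four vectors. -/
def wedge4 (k : Type*) [Field k] (i j l m : Fin 7) (x : Fin 4 → V7 k) : k :=
  Matrix.det (Matrix.of fun a b => x a (![i, j, l, m] b))

/-- The `G₂`-invariant 4-form
`λ = 2e₀∨∧e_α∨∧e_β∨∧e_γ∨ − 2e₀∨∧e_{−α}∨∧e_{−β}∨∧e_{−γ}∨ + e_β∨∧e_{−β}∨∧e_γ∨∧e_{−γ}∨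
  + e_α∨∧e_{−α}∨∧e_γ∨∧e_{−γ}∨ + e_α∨∧e_{−α}∨∧e_β∨∧e_{−β}∨`. -/
def lamForm (k : Type*) [Field k] (x : Fin 4 → V7 k) : k :=
  2 * wedge4 k 0 1 3 5 x - 2 * wedge4 k 0 2 4 6 x + wedge4 k 3 4 5 6 x
    + wedge4 k 1 2 5 6 x + wedge4 k 1 2 3 4 x

private lemma lam_key (k : Type*) [Field k] (w₁ w₂ : V7 k) : lamForm k ![e k 1, e k 2, w₁, w₂]
        = (w₁ 5 * w₂ 6 - w₁ 6 * w₂ 5) + (w₁ 3 * w₂ 4 - w₁ 4 * w₂ 3) := by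
  simp [lamForm, wedge4, e, Pi.single_apply, Fin.succAbove, Matrix.det_succ_row_zero,
    Fin.sum_univ_succ]
  ring

private lemma mem_span_iff' (k : Type*) [Field k] (w : V7 k) :
    w ∈ Submodule.span k ({e k 0, e k 1, e k 2} : Set (V7 k)) ↔
      w 3 = 0 ∧ w 4 = 0 ∧ w 5 = 0 ∧ w 6 = 0 := by
  constructor
  · intro h
    have key : ∀ i : Fin 7, i ≠ 0 → i ≠ 1 → i ≠ 2 → w i = 0 := by
      intro i h0 h1 h2
      have : Submodule.span k ({e k 0, e k 1, e k 2} : Set (V7 k)) ≤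
          LinearMap.ker (LinearMap.proj (R := k) (φ := fun _ : Fin 7 => k) i) := by
        rw [Submodule.span_le]
        rintro x (rfl | rfl | rfl) <;>
          simp [e, Pi.single_apply, (Ne.symm h0), (Ne.symm h1), (Ne.symm h2)]
      exact this h
    exact ⟨key 3 (by decide) (by decide) (by decide), key 4 (by decide) (by decide) (by decide),
      key 5 (by decide) (by decide) (by decide), key 6 (by decide) (by decide) (by decide)⟩
  · rintro ⟨h3, h4, h5, h6⟩
    have hw : w = w 0 • e k 0 + w 1 • e k 1 + w 2 • e k 2 := by
      funext i
      fin_cases i <;> simp [e, Pi.single_apply] <;> assumption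
    rw [hw]
    refine Submodule.add_mem _ (Submodule.add_mem _ ?_ ?_) ?_ <;>
      exact Submodule.smul_mem _ _ (Submodule.subset_span (by simp))

private lemma rank3' (k : Type*) [Field k] :
    Module.finrank k ↥(Submodule.span k ({e k 0, e k 1, e k 2} : Set (V7 k))) = 3 := by
  have li : LinearIndependent k (fun i : Fin 3 => e k (Fin.castLE (by norm_num) i)) := by
    have := (Pi.basisFun k (Fin 7)).linearIndependent
    have h2 := this.comp (Fin.castLE (by norm_num : 3 ≤ 7)) (Fin.castLE_injective _)
    convert h2 using 2 with i
    simp [e, Pi.basisFun_apply]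
  have hr : Set.range (fun i : Fin 3 => e k (Fin.castLE (by norm_num) i))
      = ({e k 0, e k 1, e k 2} : Set (V7 k)) := by
    ext x
    constructor
    · rintro ⟨i, rfl⟩
      fin_cases i
      · exact Or.inl rfl
      · exact Or.inr (Or.inl rfl)
      · exact Or.inr (Or.inr rfl)
    · rintro (rfl | rfl | rfl)
      · exact ⟨0, rfl⟩
      · exact ⟨1, rfl⟩
      · exact ⟨2, rfl⟩
  rw [← hr, finrank_span_eq_card li, Fintype.card_fin]

/-- For the explicit `λ` and the 2-plane `U₂' = span(e_α, e_{−α})`, the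
contraction `λ ⌟ U₂'` equals `e_γ∨∧e_{−γ}∨ + e_β∨∧e_{−β}∨`, and this 2-form has rank `4` on
`V/U₂'` (its radical on `V` is the 3-dimensional `span(e₀, e_α, e_{−α})`, and `7 − 3 = 4` is the
maximal possible rank on the 5-dimensional quotient). -/
theorem lambda_contract_alpha_plane (k : Type*) [Field k] [CharZero k] :
    (∀ w₁ w₂ : V7 k, lamForm k ![e k 1, e k 2, w₁, w₂]
        = (w₁ 5 * w₂ 6 - w₁ 6 * w₂ 5) + (w₁ 3 * w₂ 4 - w₁ 4 * w₂ 3)) ∧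
    (∀ w : V7 k, (∀ w' : V7 k, lamForm k ![e k 1, e k 2, w, w'] = 0)
        ↔ w ∈ Submodule.span k ({e k 0, e k 1, e k 2} : Set (V7 k))) ∧
    Module.finrank k ↥(Submodule.span k ({e k 0, e k 1, e k 2} : Set (V7 k))) = 3 ∧
    Module.finrank k (V7 k) = 7 ∧
    Module.finrank k (V7 k)
      - Module.finrank k ↥(Submodule.span k ({e k 0, e k 1, e k 2} : Set (V7 k))) = 4 := by

  refine ⟨lam_key k, ?_, rank3' k, ?_, ?_⟩
  · intro w
    rw [mem_span_iff' k w]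
    constructor
    · intro h
      refine ⟨?_, ?_, ?_, ?_⟩
      · have := h (e k 4); rw [lam_key] at this; simpa [e, Pi.single_apply] using this
      · have := h (e k 3); rw [lam_key] at this
        simp [e, Pi.single_apply] at this; exact this
      · have := h (e k 6); rw [lam_key] at this; simpa [e, Pi.single_apply] using this
      · have := h (e k 5); rw [lam_key] at this
        simp [e, Pi.single_apply] at this; exact this
    · rintro ⟨h3, h4, h5, h6⟩ w'
      rw [lam_key, h3, h4, h5, h6]; ring
  · simp [Module.finrank_pi]
  · simp [Module.finrank_pi, rank3' k]
end
end
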